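/- arXiv:1906.05618 — 2 statements merged into one kernel-verified Lean document; each statement's English description precedes it below -/
import Mathlib

section
/- For any real x not in ℤ, the limit as r → ∞ of the symmetric sum ∑_{k=-r}^{r} 1/(x+k) exists and equals π·cot(πx). -/
/-!
Pairing the terms `k` and `-k` turns the symmetric partial sums into `1/x` plus the partial sums
of `∑ₙ (1/(x - n) + 1/(x + n))`, whose limit `π cot (π x) - 1/x` Mathlib obtains, for complex
`x ∉ ℤ`, by logarithmic differentiation of Euler's product for the sine.
-/

open Filter Real

theorem Finset.sum_Icc_neg_eq_add_sum_range {M : Type*} [AddCommMonoid M] (f : ℤ → M) (N : ℕ) :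
    ∑ k ∈ Icc (-(N : ℤ)) N, f k = f 0 + ∑ j ∈ range N, (f (j + 1) + f (-(j + 1))) := by
  induction N with
  | zero => simp
  | succ N ih =>
    rw [Nat.cast_succ, Icc_succ_succ, sum_union (by simp), sum_pair (by omega), ih,
      sum_range_succ]
    abel

theorem Complex.tendsto_sum_Icc_one_div_add {z : ℂ} (hz : z ∈ integerComplement) :
    Tendsto (fun N : ℕ => ∑ k ∈ Finset.Icc (-(N : ℤ)) N, 1 / (z + k))
      atTop (nhds (π * cot (π * z))) := by
  have hcot := (tendsto_logDeriv_euler_cot_sub hz).const_add (1 / z)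
  rw [add_sub_cancel] at hcot
  refine hcot.congr fun N => ?_
  rw [Finset.sum_Icc_neg_eq_add_sum_range]
  push_cast
  simp only [cotTerm, add_zero, ← sub_eq_add_neg, add_comm (1 / (z - _))]

theorem cot_partial_fraction (x : ℝ) (hx : ∀ n : ℤ, x ≠ (n : ℝ)) :
    Tendsto (fun r : ℕ => ∑ k ∈ Finset.Icc (-(r : ℤ)) (r : ℤ), 1 / (x + (k : ℝ)))
      atTop (nhds (π * Real.cot (π * x))) := by
  have hx' : (x : ℂ) ∈ Complex.integerComplement := by
    rintro ⟨n, hn⟩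
    exact hx n (by exact_mod_cast hn.symm)
  rw [← tendsto_ofReal_iff]
  push_cast
  exact Complex.tendsto_sum_Icc_one_div_add hx'
end

section
/- Let a₁, a₂, a₃ be real with a₁ > 0 and D := 4a₁a₃ - a₂² > 0 (so Q(ω) = a₁ω₁² + a₂ω₁ω₂ + a₃ω₂² is positive definite), let v > 0, let α₂ ∈ ℝ \ ℤ and set F_{α₂}(x) = sinh(2πx)/(cosh(2πx) - cos(2πα₂)). Then ∫_{ℝ²} (1/ω₁) · ∑_{±} ± F_{α₂}(ω₂ ± (a₂/(2a₃))ω₁) · e^{-2πv Q^{±}(ω₁,ω₂)} dω₁ dω₂ = 0, where Q^{±}(ω₁,ω₂) = a₁ω₁² ± a₂ω₁ω₂ + a₃ω₂², i.e., after diagonalising, the + and − contributions cancel under the substitution ω₂ → ω₂ + (a₂/a₃)ω₁. -/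
/-!
For fixed `ω₁`, completing the square shows that the `−` term is the `+` term translated by
`(a₂/a₃) ω₁` in `ω₂`. Each term is a bounded continuous function of `ω₂` (as
`cos (2πα₂) < 1`) times a Gaussian, hence integrable, so by translation invariance of Lebesgue
measure every inner integral vanishes, and by Fubini so does the double integral.
-/

open Real MeasureTheory

section Cancellation

variable {α β E : Type*} [MeasurableSpace α] [MeasurableSpace β]
  [NormedAddCommGroup E] [NormedSpace ℝ E]

/-- If `f` is not integrable on the product, its Bochner integral is `0` by convention. -/
theorem integral_prod_eq_zero_of_forall_integral_eq_zero {μ : Measure α} {ν : Measure β}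
    [SFinite μ] [SFinite ν] {f : α × β → E} (hf : ∀ x, ∫ y, f (x, y) ∂ν = 0) :
    ∫ z, f z ∂μ.prod ν = 0 := by
  by_cases hint : Integrable f (μ.prod ν)
  · simp only [integral_prod f hint, hf, integral_zero]
  · exact integral_undef hint

theorem integral_sub_comp_sub_right_eq_zero [AddGroup α] [MeasurableAdd α] {μ : Measure α}
    [μ.IsAddRightInvariant] {g : α → E} (hg : Integrable g μ) (s : α) :
    ∫ y, (g y - g (y - s)) ∂μ = 0 := by
  rw [integral_sub hg (hg.comp_sub_right s), integral_sub_right_eq_self, sub_self]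

end Cancellation

theorem integrable_exp_neg_quadratic {a : ℝ} (ha : 0 < a) (b c : ℝ) :
    Integrable fun y : ℝ => exp (-(a * y ^ 2 + b * y + c)) := by
  have hsq : ∀ y : ℝ, exp (-(a * y ^ 2 + b * y + c))
      = exp (-a * (y + b / (2 * a)) ^ 2) * exp (b ^ 2 / (4 * a) - c) := by
    intro y
    rw [← exp_add]
    congr 1
    field_simp
    ring
  simp only [hsq]
  exact ((integrable_exp_neg_mul_sq ha).comp_add_right _).mul_const _

theorem integrable_mul_exp_neg_quadratic {g : ℝ → ℝ} {C : ℝ} (hg : Continuous g)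
    (hgC : ∀ y, |g y| ≤ C) {a : ℝ} (ha : 0 < a) (b c : ℝ) :
    Integrable fun y : ℝ => g y * exp (-(a * y ^ 2 + b * y + c)) :=
  (integrable_exp_neg_quadratic ha b c).bdd_mul hg.aestronglyMeasurable
    (Filter.Eventually.of_forall hgC)

theorem Real.cos_two_pi_mul_lt_one {α : ℝ} (hα : ∀ n : ℤ, α ≠ n) :
    cos (2 * π * α) < 1 := by
  refine (cos_le_one _).lt_of_ne fun h => ?_
  obtain ⟨n, hn⟩ := (cos_eq_one_iff _).1 h
  exact hα n (by nlinarith [pi_pos])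

theorem Real.continuous_sinh_div_cosh_sub {c : ℝ} (hc : c < 1) :
    Continuous fun t => sinh t / (cosh t - c) :=
  continuous_sinh.div (continuous_cosh.sub continuous_const) fun t =>
    (sub_pos.2 (hc.trans_le (one_le_cosh t))).ne'

theorem Real.abs_sinh_div_cosh_sub_le {c : ℝ} (hc₀ : -1 ≤ c) (hc : c < 1) (t : ℝ) :
    |sinh t / (cosh t - c)| ≤ 2 / (1 - c) := by
  have hsinh : |sinh t| < cosh t := by
    rw [abs_sinh, ← cosh_abs]
    exact sinh_lt_cosh _
  have hden : 0 < cosh t - c := by linarith [one_le_cosh t]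
  rw [abs_div, abs_of_pos hden, div_le_div_iff₀ hden (by linarith)]
  nlinarith [abs_nonneg (sinh t), one_le_cosh t]

theorem pm_cancellation (a₁ a₂ a₃ : ℝ) (h₁ : 0 < a₁) (hD : 0 < 4*a₁*a₃ - a₂^2)
    (v : ℝ) (hv : 0 < v) (α₂ : ℝ) (hα₂ : ∀ n : ℤ, α₂ ≠ (n : ℝ)) :
    (∫ ω : ℝ × ℝ,
      (1 / ω.1) *
        ((Real.sinh (2*π*(ω.2 + (a₂/(2*a₃))*ω.1)) /
            (Real.cosh (2*π*(ω.2 + (a₂/(2*a₃))*ω.1)) - Real.cos (2*π*α₂)))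
            * Real.exp (-2*π*v * (a₁*ω.1^2 + a₂*ω.1*ω.2 + a₃*ω.2^2))
         - (Real.sinh (2*π*(ω.2 - (a₂/(2*a₃))*ω.1)) /
            (Real.cosh (2*π*(ω.2 - (a₂/(2*a₃))*ω.1)) - Real.cos (2*π*α₂)))
            * Real.exp (-2*π*v * (a₁*ω.1^2 - a₂*ω.1*ω.2 + a₃*ω.2^2)))) = 0 := by
  have ha₃ : 0 < a₃ := by nlinarith [sq_nonneg a₂]
  set c := cos (2 * π * α₂)
  have hc : c < 1 := cos_two_pi_mul_lt_one hα₂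
  set F : ℝ → ℝ := fun t => sinh t / (cosh t - c)
  rw [Measure.volume_eq_prod]
  refine integral_prod_eq_zero_of_forall_integral_eq_zero fun x => ?_
  set G : ℝ → ℝ := fun y => F (2 * π * (y + a₂ / (2 * a₃) * x)) *
    exp (-2 * π * v * (a₁ * x ^ 2 + a₂ * x * y + a₃ * y ^ 2))
  have hG : Integrable G := by
    have hF : Continuous fun y => F (2 * π * (y + a₂ / (2 * a₃) * x)) :=
      (continuous_sinh_div_cosh_sub hc).comp (by fun_prop)
    have hv₃ : 0 < 2 * π * v * a₃ := by positivity
    convert integrable_mul_exp_neg_quadratic hF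
      (fun y => abs_sinh_div_cosh_sub_le (neg_one_le_cos _) hc _) hv₃
      (2 * π * v * a₂ * x) (2 * π * v * a₁ * x ^ 2) using 4
    ring
  have hshift : ∀ y, G (y - a₂ / a₃ * x) = F (2 * π * (y - a₂ / (2 * a₃) * x)) *
      exp (-2 * π * v * (a₁ * x ^ 2 - a₂ * x * y + a₃ * y ^ 2)) := by
    intro y
    simp only [G]
    congr 3 <;> field_simp <;> ring
  calc _ = ∫ y, 1 / x * (G y - G (y - a₂ / a₃ * x)) := by simp only [hshift]; rfl
    _ = 0 := by rw [integral_const_mul, integral_sub_comp_sub_right_eq_zero hG, mul_zero]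
end
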